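/- If a measurable cardinal κ has a Laver function for measurability, then there are at least 2^κ = |H(κ⁺)| many normal measures on κ. -/

import Mathlib

open FirstOrder

/-- The relation symbols of the language of set theory: one binary relation. -/
inductive SetLangRel : ℕ → Type
  | mem : SetLangRel 2

/-- The first-order language of set theory: a single binary relation (membership). -/
def setLang : FirstOrder.Language := ⟨fun _ => Empty, SetLangRel⟩

/-- The axioms of ZF(C) for a membership structure, with separation and replacement
stated as (second-order) schemas over arbitrary predicates/functions.  (The axiom of
choice is derivable in this setting from the schema of replacement together with the
metatheoretic axiom of choice.) -/
structure ZFAxioms (α : Type) (mem : α → α → Prop) : Prop where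
  ext : ∀ x y : α, (∀ z, mem z x ↔ mem z y) → x = y
  found : WellFounded mem
  pairing : ∀ x y : α, ∃ p, ∀ z, mem z p ↔ (z = x ∨ z = y)
  unionAx : ∀ x : α, ∃ u, ∀ z, mem z u ↔ ∃ y, mem y x ∧ mem z y
  powerAx : ∀ x : α, ∃ p, ∀ z, mem z p ↔ (∀ w, mem w z → mem w x)
  infinityAx : ∃ i, (∃ e, mem e i ∧ ∀ z, ¬ mem z e) ∧
      ∀ x, mem x i → ∃ s, mem s i ∧ ∀ z, (mem z s ↔ (mem z x ∨ z = x))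
  separation : ∀ (φ : α → Prop) (x : α), ∃ s, ∀ z, mem z s ↔ (mem z x ∧ φ z)
  replacement : ∀ (F : α → α) (x : α), ∃ s, ∀ z, mem z s ↔ ∃ w, mem w x ∧ z = F w

/-- A model of set theory (a "universe"). -/
structure SetModel : Type 1 where
  carrier : Type
  mem : carrier → carrier → Prop
  ax : ZFAxioms carrier mem

namespace SetModel

variable (M : SetModel)

/-- The `setLang`-structure on the carrier of a model. -/
def str : setLang.Structure M.carrier :=
  ⟨fun f _ => f.elim, fun r v => match r with | .mem => M.mem (v 0) (v 1)⟩

/-- Satisfaction of a first-order formula of the language of set theory in `M`. -/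
def Sat {n : ℕ} (φ : setLang.Formula (Fin n)) (v : Fin n → M.carrier) : Prop :=
  @FirstOrder.Language.Formula.Realize setLang M.carrier M.str (Fin n) φ v

/-- A binary relation on `M` is a definable class of `M` (with parameters). -/
def DefinableRel2 (F : M.carrier → M.carrier → Prop) : Prop :=
  ∃ (n : ℕ) (φ : setLang.Formula (Fin n ⊕ Fin 2)) (params : Fin n → M.carrier),
    ∀ x y : M.carrier, F x y ↔
      @FirstOrder.Language.Formula.Realize setLang M.carrier M.str (Fin n ⊕ Fin 2) φ
        (Sum.elim params ![x, y])

/-- The `setLang`-structure on a subclass of `M`. -/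
def strIn (C : M.carrier → Prop) : setLang.Structure {x : M.carrier // C x} :=
  ⟨fun f _ => f.elim, fun r v => match r with | .mem => M.mem (v 0).1 (v 1).1⟩

/-- `j` is an elementary embedding of `M` into the subclass `C` of `M`. -/
def ElementaryInto (C : M.carrier → Prop) (j : M.carrier → M.carrier) : Prop :=
  ∃ h : ∀ x, C (j x),
    ∀ (n : ℕ) (φ : setLang.Formula (Fin n)) (v : Fin n → M.carrier),
      M.Sat φ v ↔
        @FirstOrder.Language.Formula.Realize setLang {x : M.carrier // C x} (M.strIn C)
          (Fin n) φ (fun i => ⟨j (v i), h (v i)⟩)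

/- ### Basic internal set-theoretic vocabulary -/

/-- Internal subset relation. -/
def Sub (x y : M.carrier) : Prop := ∀ z, M.mem z x → M.mem z y

/-- `x` is (the) empty set. -/
def IsEmptySet (x : M.carrier) : Prop := ∀ z, ¬ M.mem z x

/-- `x` is a transitive set. -/
def IsTrans (x : M.carrier) : Prop := ∀ y, M.mem y x → M.Sub y x

/-- `x` is an ordinal: a transitive set of transitive sets (this is equivalent to the
usual definition in the presence of foundation and extensionality). -/
def IsOrd (x : M.carrier) : Prop := M.IsTrans x ∧ ∀ y, M.mem y x → M.IsTrans y

/-- `y = x ∪ {x}` is the ordinal successor of `x`. -/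
def IsSuccOf (x y : M.carrier) : Prop := ∀ z, M.mem z y ↔ (M.mem z x ∨ z = x)

/-- `x` is an ordinal which is zero or a limit. -/
def IsLimitOrZero (x : M.carrier) : Prop :=
  M.IsOrd x ∧ ∀ β, M.mem β x → ∃ γ, M.mem γ x ∧ M.IsSuccOf β γ

/-- `s = {a}`. -/
def IsSingletonOf (a s : M.carrier) : Prop := ∀ z, M.mem z s ↔ z = a

/-- `s = {∅}`, i.e. `s` is the ordinal `1`. -/
def IsOneSet (s : M.carrier) : Prop := ∀ z, M.mem z s ↔ M.IsEmptySet z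

/-- `p` is the Kuratowski ordered pair `⟨a, b⟩ = {{a}, {a, b}}`. -/
def IsKPair (p a b : M.carrier) : Prop :=
  ∀ z, M.mem z p ↔ ((∀ w, M.mem w z ↔ w = a) ∨ (∀ w, M.mem w z ↔ (w = a ∨ w = b)))

/-- `f` is a set of Kuratowski pairs. -/
def IsRel (f : M.carrier) : Prop := ∀ p, M.mem p f → ∃ a b, M.IsKPair p a b

/-- The (internal) function `f` sends `x` to `y`. -/
def Maps (f x y : M.carrier) : Prop := ∃ p, M.mem p f ∧ M.IsKPair p x y

/-- `f` is an internal function with domain `d`. -/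
def IsFuncDom (f d : M.carrier) : Prop :=
  M.IsRel f ∧ (∀ p a b, M.mem p f → M.IsKPair p a b → M.mem a d) ∧
  (∀ x, M.mem x d → ∃ y, M.Maps f x y) ∧
  (∀ x y y', M.Maps f x y → M.Maps f x y' → y = y')

/-- `f` is an internal function from `d` to `c`. -/
def IsFunc (f d c : M.carrier) : Prop :=
  M.IsFuncDom f d ∧ ∀ x y, M.Maps f x y → M.mem y c

/-- `f` is an internal injection from `d` into `c`. -/
def IsInj (f d c : M.carrier) : Prop :=
  M.IsFunc f d c ∧ ∀ x x' y, M.Maps f x y → M.Maps f x' y → x = x'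

/-- `f` is an internal bijection from `d` onto `c`. -/
def IsBij (f d c : M.carrier) : Prop :=
  M.IsInj f d c ∧ ∀ y, M.mem y c → ∃ x, M.mem x d ∧ M.Maps f x y

/-- `a` and `b` are equinumerous (in `M`). -/
def Equinum (a b : M.carrier) : Prop := ∃ f, M.IsBij f a b

/-- The cardinality of `a` is at most that of `b` (in `M`). -/
def CardLE (a b : M.carrier) : Prop := ∃ f, M.IsInj f a b

/-- The cardinality of `a` is (strictly) less than the cardinal `κ`:
`a` injects into some element of `κ`. -/
def CardLT (a κ : M.carrier) : Prop := ∃ β f, M.mem β κ ∧ M.IsInj f a β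

/-- `κ` is a cardinal: an ordinal not equinumerous with any of its elements. -/
def IsCardinal (κ : M.carrier) : Prop :=
  M.IsOrd κ ∧ ∀ β, M.mem β κ → ¬ M.Equinum β κ

/-- `o` is the set `ω` of natural numbers: the least nonzero limit ordinal. -/
def IsOmegaSet (o : M.carrier) : Prop :=
  M.IsLimitOrZero o ∧ (∃ e, M.mem e o) ∧
  ∀ x, M.mem x o → ¬ (M.IsLimitOrZero x ∧ ∃ e, M.mem e x)

/-- `x` is a finite set. -/
def IsFiniteSet (x : M.carrier) : Prop :=
  ∃ o n f, M.IsOmegaSet o ∧ M.mem n o ∧ M.IsBij f x n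

/-- `p` is the power set of `x`. -/
def IsPowerOf (p x : M.carrier) : Prop := ∀ z, M.mem z p ↔ M.Sub z x

/-- `μ = κ⁺` is the successor cardinal of `κ`. -/
def IsCardSuccOf (κ μ : M.carrier) : Prop :=
  M.IsCardinal μ ∧ M.mem κ μ ∧ ∀ ν, M.IsCardinal ν → M.mem κ ν → M.Sub μ ν

/-- The cardinal `θ` equals `2^κ`, the cardinality of the power set of `κ`. -/
def SameCardAsPower (κ θ : M.carrier) : Prop :=
  M.IsCardinal θ ∧ ∃ p, M.IsPowerOf p κ ∧ M.Equinum θ p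

/-- The cardinal `θ` equals `2^(2^κ)`. -/
def SameCardAsPowerPower (κ θ : M.carrier) : Prop :=
  M.IsCardinal θ ∧ ∃ p q, M.IsPowerOf p κ ∧ M.IsPowerOf q p ∧ M.Equinum θ q

/-- `κ` is an infinite cardinal (ω ⊆ κ). -/
def IsInfiniteCard (κ : M.carrier) : Prop :=
  M.IsCardinal κ ∧ ∃ o, M.IsOmegaSet o ∧ M.Sub o κ

/-- The Generalized Continuum Hypothesis holds in `M`. -/
def GCHolds : Prop :=
  ∀ κ p μ, M.IsInfiniteCard κ → M.IsPowerOf p κ → M.IsCardSuccOf κ μ → M.Equinum p μ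

/-- `κ` is a regular (infinite) cardinal: the range of any function from an element
of `κ` into `κ` is bounded below `κ`. -/
def IsRegular (κ : M.carrier) : Prop :=
  M.IsInfiniteCard κ ∧
  ∀ β f, M.mem β κ → M.IsFunc f β κ →
    ∃ γ, M.mem γ κ ∧ ∀ x y, M.Maps f x y → M.mem y γ

/-- `κ` is a strong limit cardinal. -/
def IsStrongLimit (κ : M.carrier) : Prop :=
  M.IsCardinal κ ∧ ∀ β p, M.mem β κ → M.IsPowerOf p β → M.CardLT p κ

/-- `κ` is (strongly) inaccessible. -/
def IsInaccessible (κ : M.carrier) : Prop :=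
  M.IsRegular κ ∧ M.IsStrongLimit κ ∧ ∃ o, M.IsOmegaSet o ∧ M.mem o κ

/- ### Measures -/

/-- `U` is an ultrafilter on the set `s`. -/
def IsUltrafilterOn (U s : M.carrier) : Prop :=
  (∀ x, M.mem x U → M.Sub x s) ∧
  M.mem s U ∧
  (∀ x, M.mem x U → ∃ z, M.mem z x) ∧
  (∀ x y, M.mem x U → M.Sub x y → M.Sub y s → M.mem y U) ∧
  (∀ x y w, M.mem x U → M.mem y U →
    (∀ z, M.mem z w ↔ (M.mem z x ∧ M.mem z y)) → M.mem w U) ∧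
  (∀ x, M.Sub x s → (M.mem x U ∨ ∃ y, M.mem y U ∧ ∀ z, M.mem z s → (M.mem z y ↔ ¬ M.mem z x)))

/-- `U` is `κ`-complete (`κ`-additive): closed under intersections of (nonempty)
families of fewer than `κ` of its members. -/
def IsCompleteOn (U κ : M.carrier) : Prop :=
  ∀ F w, (∃ x, M.mem x F) → (∀ x, M.mem x F → M.mem x U) → M.CardLT F κ →
    (∀ z, M.mem z w ↔ ∀ x, M.mem x F → M.mem z x) → M.mem w U

/-- `U` is nonprincipal: it contains no singleton. -/
def IsNonprincipal (U : M.carrier) : Prop :=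
  ∀ x a, M.mem x U → ¬ M.IsSingletonOf a x

/-- `U` is normal on the ordinal `κ`: every function regressive on a set in `U` is
constant on a set in `U`. -/
def IsNormalOn (U κ : M.carrier) : Prop :=
  ∀ A f, M.mem A U → M.IsFunc f A κ → (∀ x y, M.Maps f x y → M.mem y x) →
    ∃ B β, M.mem B U ∧ ∀ x y, M.mem x B → M.Maps f x y → y = β

/-- `U` is a normal measure on `κ`: a `κ`-complete nonprincipal normal ultrafilter
on the cardinal `κ`. -/
def IsNormalMeasureOn (U κ : M.carrier) : Prop :=
  M.IsCardinal κ ∧ M.IsUltrafilterOn U κ ∧ M.IsCompleteOn U κ ∧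
  M.IsNonprincipal U ∧ M.IsNormalOn U κ

/-- `κ` is a measurable cardinal: it carries a normal measure. -/
def IsMeasurableCard (κ : M.carrier) : Prop := ∃ U, M.IsNormalMeasureOn U κ

/-- `s` is the set of all normal measures on `κ`. -/
def IsNormalMeasuresSet (κ s : M.carrier) : Prop :=
  ∀ U, M.mem U s ↔ M.IsNormalMeasureOn U κ

/- ### Measures on `P_κ(λ)` -/

/-- `s = P_κ(λ)`, the set of subsets of `λ` of size less than `κ`. -/
def IsPklSet (κ lam s : M.carrier) : Prop :=
  ∀ x, M.mem x s ↔ (M.Sub x lam ∧ M.CardLT x κ)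

/-- `U` is a fine, `κ`-additive measure (ultrafilter) on `pkl = P_κ(λ)`,
witnessing `λ`-strong compactness. -/
def IsSCMeasureOn (U κ lam pkl : M.carrier) : Prop :=
  M.IsPklSet κ lam pkl ∧ M.IsUltrafilterOn U pkl ∧ M.IsCompleteOn U κ ∧
  ∀ α, M.mem α lam →
    ∀ x, (∀ σ, M.mem σ x ↔ (M.mem σ pkl ∧ M.mem α σ)) → M.mem x U

/-- `U` is normal on `P_κ(λ)`: every choice function on a set in `U` is constant
on a set in `U`. -/
def IsNormalOnPkl (U : M.carrier) : Prop :=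
  ∀ A f, M.mem A U → M.IsFuncDom f A → (∀ σ y, M.Maps f σ y → M.mem y σ) →
    ∃ B β, M.mem B U ∧ ∀ σ y, M.mem σ B → M.Maps f σ y → y = β

/-- `U` is a fine, normal, `κ`-additive measure on `pkl = P_κ(λ)`,
witnessing `λ`-supercompactness. -/
def IsSupcMeasureOn (U κ lam pkl : M.carrier) : Prop :=
  M.IsSCMeasureOn U κ lam pkl ∧ M.IsNormalOnPkl U

/-- `κ` is `λ`-strongly compact. -/
def IsLamStronglyCompact (κ lam : M.carrier) : Prop :=
  ∃ pkl U, M.IsSCMeasureOn U κ lam pkl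

/-- `κ` is `λ`-supercompact. -/
def IsLamSupercompact (κ lam : M.carrier) : Prop :=
  ∃ pkl U, M.IsSupcMeasureOn U κ lam pkl

/-- `s` is the set of all fine `κ`-additive measures on `pkl = P_κ(λ)`. -/
def IsSCMeasuresSet (κ lam pkl s : M.carrier) : Prop :=
  ∀ U, M.mem U s ↔ M.IsSCMeasureOn U κ lam pkl

/-- `s` is the set of all fine normal `κ`-additive measures on `pkl = P_κ(λ)`. -/
def IsSupcMeasuresSet (κ lam pkl s : M.carrier) : Prop :=
  ∀ U, M.mem U s ↔ M.IsSupcMeasureOn U κ lam pkl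

/- ### The cumulative hierarchy, H(κ⁺), transitive closures -/

/-- `h` is the function `β ↦ V_β` for `β < κ`. -/
def IsVHier (h κ : M.carrier) : Prop :=
  M.IsFuncDom h κ ∧ ∀ β v, M.mem β κ → M.Maps h β v →
    ∀ z, M.mem z v ↔ ∃ γ w, M.mem γ β ∧ M.Maps h γ w ∧ M.Sub z w

/-- `v = V_κ`, the rank-initial segment of the universe. -/
def IsVSet (κ v : M.carrier) : Prop :=
  ∃ h, M.IsVHier h κ ∧ ∀ z, M.mem z v ↔ ∃ β w, M.mem β κ ∧ M.Maps h β w ∧ M.Sub z w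

/-- `t` is the transitive closure of `x`. -/
def IsTransClosureOf (x t : M.carrier) : Prop :=
  M.IsTrans t ∧ M.Sub x t ∧ ∀ t', M.IsTrans t' → M.Sub x t' → M.Sub t t'

/-- `x ∈ H(κ⁺)`: the transitive closure of `x` has size at most `κ`. -/
def InHSucc (κ x : M.carrier) : Prop :=
  ∃ t, M.IsTransClosureOf x t ∧ M.CardLE t κ

/-- `h = H(κ⁺)`. -/
def IsHSuccSet (κ h : M.carrier) : Prop := ∀ x, M.mem x h ↔ M.InHSucc κ x

/- ### Posets, strategic closure -/

/-- `q ≤ p` in the internal order `R` (a set of Kuratowski pairs). -/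
def leIn (R q p : M.carrier) : Prop := ∃ pr, M.mem pr R ∧ M.IsKPair pr q p

/-- `(P, R)` is an internal partial order. -/
def IsPosetPair (P R : M.carrier) : Prop :=
  (∀ pr, M.mem pr R → ∃ q p, M.mem q P ∧ M.mem p P ∧ M.IsKPair pr q p) ∧
  (∀ p, M.mem p P → M.leIn R p p) ∧
  (∀ p q r, M.leIn R p q → M.leIn R q r → M.leIn R p r) ∧
  (∀ p q, M.leIn R p q → M.leIn R q p → p = q)

/-- `t = s ↾ β`, the restriction of the internal function `s` to `β`. -/
def IsRestrictionTo (s β t : M.carrier) : Prop :=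
  ∀ p, M.mem p t ↔ (M.mem p s ∧ ∃ a b, M.IsKPair p a b ∧ M.mem a β)

/-- `E` is the set of even ordinals (zero and limits included) below `θ`. -/
def IsEvenSetUpTo (θ E : M.carrier) : Prop :=
  (∀ β, M.mem β E → M.mem β θ) ∧
  ∀ β, M.mem β θ →
    (M.mem β E ↔ (M.IsLimitOrZero β ∨
      ∃ γ γ', M.mem γ E ∧ M.IsSuccOf γ γ' ∧ M.IsSuccOf γ' β))

/-- The internal poset `(P, R)` is `δ`-strategically closed: player II has a winning
strategy, playing at even stages (including 0 and limits), ensuring that play can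
continue for `δ` many steps. -/
def IsStratClosed (P R δ : M.carrier) : Prop :=
  ∃ σ : M.carrier → M.carrier,
    ∀ δ' E, M.IsSuccOf δ δ' → M.IsEvenSetUpTo δ' E →
      ∀ γ s, M.mem γ E → M.IsFunc s γ P →
        (∀ α β x y, M.mem α β → M.mem β γ → M.Maps s α x → M.Maps s β y → M.leIn R y x) →
        (∀ β t, M.mem β γ → M.mem β E → M.IsRestrictionTo s β t → M.Maps s β (σ t)) →
        (M.mem (σ s) P ∧ ∀ β y, M.mem β γ → M.Maps s β y → M.leIn R (σ s) y)

/- ### Named forcing notions -/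

/-- `(P, R)` is the Cohen forcing `Add(κ, γ)`: partial functions from `κ × γ` to `2`
of size less than `κ`, ordered by reverse inclusion. -/
def IsAddPoset (κ γ P R : M.carrier) : Prop :=
  ∃ two prod,
    (∀ z, M.mem z two ↔ (M.IsEmptySet z ∨ ∃ e, M.IsEmptySet e ∧ M.IsSingletonOf e z)) ∧
    (∀ p, M.mem p prod ↔ ∃ a b, M.mem a κ ∧ M.mem b γ ∧ M.IsKPair p a b) ∧
    (∀ p, M.mem p P ↔ ∃ d, M.Sub d prod ∧ M.CardLT d κ ∧ M.IsFunc p d two) ∧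
    (∀ pr, M.mem pr R ↔ ∃ q p, M.mem q P ∧ M.mem p P ∧ M.IsKPair pr q p ∧ M.Sub p q)

/-- `(P, R)` is the Lévy collapse `Coll(κ, λ)`: partial functions from `κ` to `λ`
of size less than `κ`, ordered by reverse inclusion. -/
def IsCollPoset (κ lam P R : M.carrier) : Prop :=
  (∀ p, M.mem p P ↔ ∃ d, M.Sub d κ ∧ M.CardLT d κ ∧ M.IsFunc p d lam) ∧
  (∀ pr, M.mem pr R ↔ ∃ q p, M.mem q P ∧ M.mem p P ∧ M.IsKPair pr q p ∧ M.Sub p q)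

/- ### Inner classes and embeddings -/

/-- `C` is an inner class of `M`: a transitive subclass which, with the induced
membership relation, is again a model of the axioms. -/
def IsInnerClass (C : M.carrier → Prop) : Prop :=
  (∀ x y, C y → M.mem x y → C x) ∧
  ZFAxioms {x : M.carrier // C x} (fun a b => M.mem a.1 b.1)

/-- `κ` is the critical point of `j`. -/
def IsCritOf (j : M.carrier → M.carrier) (κ : M.carrier) : Prop :=
  M.IsOrd κ ∧ j κ ≠ κ ∧ ∀ β, M.mem β κ → j β = β

end SetModel

/-- The model obtained by restricting `M` to an inner class `C`. -/
def SetModel.ofInner (M : SetModel) (C : M.carrier → Prop) (h : M.IsInnerClass C) :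
    SetModel :=
  ⟨{x : M.carrier // C x}, fun a b => M.mem a.1 b.1, h.2⟩

/-- An embedding of the universe `V` into the universe `W`, realizing `V` as a
transitive sub-universe of `W`. -/
structure ModelEmb (V W : SetModel) where
  emb : V.carrier → W.carrier
  inj : Function.Injective emb
  memIff : ∀ x y, V.mem x y ↔ W.mem (emb x) (emb y)
  transImg : ∀ w x, W.mem w (emb x) → ∃ z, w = emb z

/-- `W = V[G]` is a forcing extension of `V`: `W` realizes `V` as a transitive
sub-universe, and there is a poset `(P, R)` of `V` and a `V`-generic filter
`G ∈ W` on it such that `W` is the least inner class of itself containing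
(the copy of) `V` and `G`. -/
structure GenericExt (V W : SetModel) where
  emb : V.carrier → W.carrier
  inj : Function.Injective emb
  memIff : ∀ x y, V.mem x y ↔ W.mem (emb x) (emb y)
  transImg : ∀ w x, W.mem w (emb x) → ∃ z, w = emb z
  P : V.carrier
  R : V.carrier
  poset : V.IsPosetPair P R
  G : W.carrier
  G_sub : ∀ q, W.mem q G → ∃ q₀, V.mem q₀ P ∧ q = emb q₀
  G_ne : ∃ q, W.mem q G
  G_dir : ∀ q₁ q₂, W.mem (emb q₁) G → W.mem (emb q₂) G →
    ∃ q, W.mem (emb q) G ∧ V.leIn R q q₁ ∧ V.leIn R q q₂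
  G_up : ∀ q p, W.mem (emb q) G → V.mem p P → V.leIn R q p → W.mem (emb p) G
  G_gen : ∀ D, (∀ d, V.mem d D → V.mem d P) →
    (∀ p, V.mem p P → ∃ d, V.mem d D ∧ V.leIn R d p) →
    ∃ d, V.mem d D ∧ W.mem (emb d) G
  minimal : ∀ C : W.carrier → Prop, W.IsInnerClass C →
    (∀ x, C (emb x)) → C G → ∀ x, C x

/-- The extension `V ⊆ W` admits a closure point at `δ`: it factors as a nontrivial
extension by a poset of size at most `δ`, followed by an extension by a poset which
is `δ`-strategically closed in the intermediate model. -/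
def AdmitsClosurePoint (V W : SetModel) (E : ModelEmb V W) (δ : V.carrier) : Prop :=
  ∃ (V₁ : SetModel) (E₁ : GenericExt V V₁) (E₂ : GenericExt V₁ W),
    (∀ x, E.emb x = E₂.emb (E₁.emb x)) ∧
    (∃ x : V₁.carrier, ¬ ∃ y, x = E₁.emb y) ∧
    V.CardLE E₁.P δ ∧
    V₁.IsStratClosed E₂.P E₂.R (E₁.emb δ)

/-- The extension `V ⊆ W` exhibits `κ`-covering: every set of ordinals in `W` of
size less than `κ` is covered by a set of ordinals of `V` of size less than `κ`. -/
def KappaCovering (V W : SetModel) (E : ModelEmb V W) (κ : V.carrier) : Prop :=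
  ∀ x, (∀ z, W.mem z x → W.IsOrd z) → W.CardLT x (E.emb κ) →
    ∃ y, (∀ z, V.mem z y → V.IsOrd z) ∧ V.CardLT y κ ∧
      ∀ z, W.mem z x → W.mem z (E.emb y)

/-- An ultrapower embedding of the universe `W`, computed from a measure `U ∈ W` on
a set `s ∈ W`: an elementary embedding `j` of `W` into an inner class `C`, together
with the seed `[id]_U`, such that `U` is the measure derived from `j` and the seed,
and every element of the target is of the form `j(f)(seed)`. -/
structure UltrapowerIn (W : SetModel) where
  C : W.carrier → Prop
  inner : W.IsInnerClass C
  j : W.carrier → W.carrier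
  elem : W.ElementaryInto C j
  s : W.carrier
  U : W.carrier
  ultra : W.IsUltrafilterOn U s
  seed : W.carrier
  seedC : C seed
  measures : ∀ X, W.Sub X s → (W.mem X U ↔ W.mem seed (j X))
  onto : ∀ y, C y → ∃ f, W.IsFuncDom f s ∧ W.Maps (j f) seed y

/-- `j : W → C` is the ultrapower embedding of `W` by the normal measure `U` on `κ`. -/
def IsNormalUltrapower (W : SetModel) (κ U : W.carrier) (C : W.carrier → Prop)
    (j : W.carrier → W.carrier) : Prop :=
  W.IsInnerClass C ∧ W.ElementaryInto C j ∧ W.IsNormalMeasureOn U κ ∧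
  W.IsCritOf j κ ∧
  (∀ X, W.Sub X κ → (W.mem X U ↔ W.mem κ (j X))) ∧
  (∀ y, C y → ∃ f, W.IsFuncDom f κ ∧ W.Maps (j f) κ y)

/-- The Mitchell order on normal measures on `κ`:`U ◁ U'` iff `U` belongs to the
ultrapower of the universe by `U'`. -/
def MitchellLT (W : SetModel) (κ U U' : W.carrier) : Prop :=
  ∃ C j, IsNormalUltrapower W κ U' C j ∧ C U

/-- The Mitchell rank `o(κ)` equals the ordinal `δ`: there is a rank function for
the Mitchell order on the normal measures on `κ` whose ranks have supremum `δ`. -/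
def MitchellRankIs (W : SetModel) (κ δ : W.carrier) : Prop :=
  W.IsOrd δ ∧ ∃ ρ : W.carrier → W.carrier,
    (∀ U, W.IsNormalMeasureOn U κ →
      (W.IsOrd (ρ U) ∧ W.mem (ρ U) δ ∧
      (∀ U', W.IsNormalMeasureOn U' κ → MitchellLT W κ U' U → W.mem (ρ U') (ρ U)) ∧
      (∀ β, W.mem β (ρ U) →
        ∃ U', W.IsNormalMeasureOn U' κ ∧ MitchellLT W κ U' U ∧ W.Sub β (ρ U')))) ∧
    (∀ β, W.mem β δ → ∃ U, W.IsNormalMeasureOn U κ ∧ W.Sub β (ρ U))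

/-- There are exactly `κ⁺` many normal measures on `κ` in `W`. -/
def HasExactlySuccManyNormalMeasures (W : SetModel) (κ : W.carrier) : Prop :=
  ∃ μ s, W.IsCardSuccOf κ μ ∧ W.IsNormalMeasuresSet κ s ∧ W.Equinum s μ

/-- `κ` has a Laver function for measurability in `W`. -/
def HasLaverFunction (W : SetModel) (κ : W.carrier) : Prop :=
  ∃ ell v, W.IsVSet κ v ∧ W.IsFunc ell κ v ∧
    ∀ x, W.InHSucc κ x →
      ∃ U C j, IsNormalUltrapower W κ U C j ∧ W.Maps (j ell) κ x

/-- `κ` is `μ`-measurable in `W`: there is an elementary embedding `j : W → C` with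
critical point `κ` whose induced normal measure belongs to `C`. -/
def IsMuMeasurable (W : SetModel) (κ : W.carrier) : Prop :=
  ∃ C j, W.IsInnerClass C ∧ W.ElementaryInto C j ∧ W.IsCritOf j κ ∧
    ∃ u, C u ∧ ∀ X, W.mem X u ↔ (W.Sub X κ ∧ W.mem κ (j X))

/-- A two-step forcing extension `V ⊆ W₁ ⊆ W₂` by `Add(ω,1) ∗ Coll(κ⁺, 2^(2^κ))`:
first add a Cohen real, then collapse `2^(2^κ)` to `κ⁺`. -/
structure TwoStepAddColl (V W₁ W₂ : SetModel) (κ : V.carrier) where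
  E₁ : GenericExt V W₁
  E₂ : GenericExt W₁ W₂
  addP : ∃ o one, V.IsOmegaSet o ∧ V.IsOneSet one ∧ V.IsAddPoset o one E₁.P E₁.R
  collP : ∃ κp θ, W₁.IsCardSuccOf (E₁.emb κ) κp ∧
    W₁.SameCardAsPowerPower (E₁.emb κ) θ ∧ W₁.IsCollPoset κp θ E₂.P E₂.R


/- ### Auxiliary machinery -/

namespace SetModel

variable {V : SetModel}

lemma eq_of_ext {x y : V.carrier} (h : ∀ z, V.mem z x ↔ V.mem z y) : x = y := V.ax.ext x y h

lemma exists_singleton (a : V.carrier) : ∃ s, ∀ z, V.mem z s ↔ z = a := by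
  obtain ⟨p, hp⟩ := V.ax.pairing a a
  exact ⟨p, fun z => by simp [hp z]⟩

lemma exists_kpair (a b : V.carrier) : ∃ p, V.IsKPair p a b := by
  obtain ⟨sa, hsa⟩ := exists_singleton (V := V) a
  obtain ⟨sab, hsab⟩ := V.ax.pairing a b
  obtain ⟨p, hp⟩ := V.ax.pairing sa sab
  refine ⟨p, fun z => ?_⟩
  rw [hp]
  constructor
  · rintro (rfl | rfl)
    · exact Or.inl (fun w => hsa w)
    · exact Or.inr (fun w => hsab w)
  · rintro (h | h)
    · exact Or.inl (eq_of_ext (fun w => by rw [h w, hsa w]))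
    · exact Or.inr (eq_of_ext (fun w => by rw [h w, hsab w]))

lemma kpair_inj {p a b a' b' : V.carrier} (h : V.IsKPair p a b) (h' : V.IsKPair p a' b') :
    a = a' ∧ b = b' := by
  obtain ⟨sa, hsa⟩ := exists_singleton (V := V) a
  have hsap : V.mem sa p := (h sa).2 (Or.inl (fun w => hsa w))
  have haa' : a = a' := by
    rcases (h' sa).1 hsap with h1 | h1
    · have := (h1 a).1 ((hsa a).2 rfl); exact this
    · rcases (h1 a).1 ((hsa a).2 rfl) with h2 | h2
      · exact h2
      · -- a = b' ; also a' ∈ sa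
        have : V.mem a' sa := (h1 a').2 (Or.inl rfl)
        exact ((hsa a').1 this).symm
  subst haa'
  refine ⟨rfl, ?_⟩
  obtain ⟨q, hq⟩ := V.ax.pairing a b
  have hqp : V.mem q p := (h q).2 (Or.inr (fun w => hq w))
  rcases (h' q).1 hqp with h1 | h1
  · -- q = {a}, so b = a
    have hba : b = a := (h1 b).1 ((hq b).2 (Or.inr rfl))
    obtain ⟨q', hq'⟩ := V.ax.pairing a b'
    have hq'p : V.mem q' p := (h' q').2 (Or.inr (fun w => hq' w))
    rcases (h q').1 hq'p with h2 | h2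
    · have : b' = a := (h2 b').1 ((hq' b').2 (Or.inr rfl))
      rw [this, hba]
    · rcases (h2 b').1 ((hq' b').2 (Or.inr rfl)) with h3 | h3
      · rw [h3, hba]
      · exact h3.symm ▸ rfl
  · rcases (h1 b).1 ((hq b).2 (Or.inr rfl)) with h2 | h2
    · -- b = a
      rcases (hq b').1 ((h1 b').2 (Or.inr rfl)) with h3 | h3
      · rw [h2, h3]
      · rw [h3]
    · exact h2

/-- Build the internal graph of an external function on an internal domain. -/
lemma exists_graph (d : V.carrier) (G : V.carrier → V.carrier) :
    ∃ f, ∀ x y, V.Maps f x y ↔ (V.mem x d ∧ y = G x) := by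
  classical
  have hF : ∀ w, V.IsKPair (Classical.choose (exists_kpair (V := V) w (G w))) w (G w) :=
    fun w => Classical.choose_spec (exists_kpair (V := V) w (G w))
  set F : V.carrier → V.carrier := fun w => Classical.choose (exists_kpair (V := V) w (G w))
  obtain ⟨f, hf⟩ := V.ax.replacement F d
  refine ⟨f, fun x y => ?_⟩
  constructor
  · rintro ⟨p, hpf, hpk⟩
    obtain ⟨w, hwd, rfl⟩ := (hf p).1 hpf
    obtain ⟨rfl, rfl⟩ := kpair_inj hpk (hF w)
    exact ⟨hwd, rfl⟩
  · rintro ⟨hxd, rfl⟩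
    exact ⟨F x, (hf (F x)).2 ⟨x, hxd, rfl⟩, hF x⟩

/-- An internal injection from an external injection. -/
lemma exists_isInj (d c : V.carrier) (G : V.carrier → V.carrier)
    (hGc : ∀ z, V.mem z d → V.mem (G z) c)
    (hGi : ∀ z z', V.mem z d → V.mem z' d → G z = G z' → z = z') :
    ∃ f, V.IsInj f d c := by
  classical
  have hF : ∀ w, V.IsKPair (Classical.choose (exists_kpair (V := V) w (G w))) w (G w) :=
    fun w => Classical.choose_spec (exists_kpair (V := V) w (G w))
  set F : V.carrier → V.carrier := fun w => Classical.choose (exists_kpair (V := V) w (G w))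
  obtain ⟨f, hf⟩ := V.ax.replacement F d
  have hmaps : ∀ x y, V.Maps f x y ↔ (V.mem x d ∧ y = G x) := by
    intro x y
    constructor
    · rintro ⟨p, hpf, hpk⟩
      obtain ⟨w, hwd, rfl⟩ := (hf p).1 hpf
      obtain ⟨rfl, rfl⟩ := kpair_inj hpk (hF w)
      exact ⟨hwd, rfl⟩
    · rintro ⟨hxd, rfl⟩
      exact ⟨F x, (hf (F x)).2 ⟨x, hxd, rfl⟩, hF x⟩
  refine ⟨f, ⟨⟨⟨?_, ?_, ?_, ?_⟩, ?_⟩, ?_⟩⟩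
  · intro p hpf
    obtain ⟨w, hwd, rfl⟩ := (hf p).1 hpf
    exact ⟨w, G w, hF w⟩
  · intro p a b hpf hpk
    obtain ⟨w, hwd, rfl⟩ := (hf p).1 hpf
    obtain ⟨rfl, rfl⟩ := kpair_inj hpk (hF w)
    exact hwd
  · intro x hxd
    exact ⟨G x, (hmaps x (G x)).2 ⟨hxd, rfl⟩⟩
  · intro x y y' h1 h2
    obtain ⟨_, rfl⟩ := (hmaps x y).1 h1
    obtain ⟨_, rfl⟩ := (hmaps x y').1 h2
    rfl
  · intro x y h1
    obtain ⟨hxd, rfl⟩ := (hmaps x y).1 h1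
    exact hGc x hxd
  · intro x x' y h1 h2
    obtain ⟨hxd, hy⟩ := (hmaps x y).1 h1
    obtain ⟨hx'd, hy'⟩ := (hmaps x' y).1 h2
    exact hGi x x' hxd hx'd (hy.symm.trans hy')

/-- An internal bijection from an external bijection. -/
lemma exists_isBij (d c : V.carrier) (G : V.carrier → V.carrier)
    (hGc : ∀ z, V.mem z d → V.mem (G z) c)
    (hGi : ∀ z z', V.mem z d → V.mem z' d → G z = G z' → z = z')
    (hGs : ∀ y, V.mem y c → ∃ z, V.mem z d ∧ G z = y) :
    ∃ f, V.IsBij f d c := by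
  classical
  have hF : ∀ w, V.IsKPair (Classical.choose (exists_kpair (V := V) w (G w))) w (G w) :=
    fun w => Classical.choose_spec (exists_kpair (V := V) w (G w))
  set F : V.carrier → V.carrier := fun w => Classical.choose (exists_kpair (V := V) w (G w))
  obtain ⟨f, hf⟩ := V.ax.replacement F d
  have hmaps : ∀ x y, V.Maps f x y ↔ (V.mem x d ∧ y = G x) := by
    intro x y
    constructor
    · rintro ⟨p, hpf, hpk⟩
      obtain ⟨w, hwd, rfl⟩ := (hf p).1 hpf
      obtain ⟨rfl, rfl⟩ := kpair_inj hpk (hF w)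
      exact ⟨hwd, rfl⟩
    · rintro ⟨hxd, rfl⟩
      exact ⟨F x, (hf (F x)).2 ⟨x, hxd, rfl⟩, hF x⟩
  refine ⟨f, ⟨⟨⟨⟨?_, ?_, ?_, ?_⟩, ?_⟩, ?_⟩, ?_⟩⟩
  · intro p hpf
    obtain ⟨w, hwd, rfl⟩ := (hf p).1 hpf
    exact ⟨w, G w, hF w⟩
  · intro p a b hpf hpk
    obtain ⟨w, hwd, rfl⟩ := (hf p).1 hpf
    obtain ⟨rfl, rfl⟩ := kpair_inj hpk (hF w)
    exact hwd
  · intro x hxd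
    exact ⟨G x, (hmaps x (G x)).2 ⟨hxd, rfl⟩⟩
  · intro x y y' h1 h2
    obtain ⟨_, rfl⟩ := (hmaps x y).1 h1
    obtain ⟨_, rfl⟩ := (hmaps x y').1 h2
    rfl
  · intro x y h1
    obtain ⟨hxd, rfl⟩ := (hmaps x y).1 h1
    exact hGc x hxd
  · intro x x' y h1 h2
    obtain ⟨hxd, hy⟩ := (hmaps x y).1 h1
    obtain ⟨hx'd, hy'⟩ := (hmaps x' y).1 h2
    exact hGi x x' hxd hx'd (hy.symm.trans hy')
  · intro y hyc
    obtain ⟨z, hzd, rfl⟩ := hGs y hyc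
    exact ⟨z, hzd, (hmaps z (G z)).2 ⟨hzd, rfl⟩⟩

/-- Extract an external injection from an internal one. -/
lemma extract_inj {f d c : V.carrier} (h : V.IsInj f d c) :
    ∃ G : V.carrier → V.carrier,
      (∀ z, V.mem z d → V.mem (G z) c) ∧
      (∀ z z', V.mem z d → V.mem z' d → G z = G z' → z = z') ∧
      (∀ z, V.mem z d → V.Maps f z (G z)) := by
  classical
  obtain ⟨⟨⟨_, _, htot, hfun⟩, hcod⟩, hinj⟩ := h
  choose G hG using htot
  refine ⟨fun z => if hz : V.mem z d then G z hz else z, ?_, ?_, ?_⟩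
  · intro z hz; simp only [dif_pos hz]; exact hcod z _ (hG z hz)
  · intro z z' hz hz' he
    simp only [dif_pos hz, dif_pos hz'] at he
    exact hinj z z' _ (hG z hz) (he ▸ hG z' hz')
  · intro z hz; simp only [dif_pos hz]; exact hG z hz

lemma exists_sep (x : V.carrier) (φ : V.carrier → Prop) :
    ∃ s, ∀ z, V.mem z s ↔ (V.mem z x ∧ φ z) := V.ax.separation φ x

/-- Removing a point from a member of a nonprincipal ultrafilter. -/
lemma diff_singleton_mem {U κ x a : V.carrier} (hUF : V.IsUltrafilterOn U κ)
    (hnp : V.IsNonprincipal U) (hxU : V.mem x U) (hax : V.mem a x) :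
    ∃ y, V.mem y U ∧ ∀ z, V.mem z y ↔ (V.mem z x ∧ z ≠ a) := by
  obtain ⟨hsub, hκU, hne, hup, hint, hdich⟩ := hUF
  obtain ⟨y, hy⟩ := exists_sep (V := V) x (fun z => z ≠ a)
  have hysub : V.Sub y κ := fun z hz => hsub x hxU z ((hy z).1 hz).1
  rcases hdich y hysub with hyU | ⟨y', hy'U, hy'⟩
  · exact ⟨y, hyU, fun z => hy z⟩
  · exfalso
    obtain ⟨w, hw⟩ := exists_sep (V := V) x (fun z => V.mem z y')
    have hwU : V.mem w U := hint x y' w hxU hy'U (fun z => hw z)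
    obtain ⟨c, hc⟩ := hne w hwU
    have hkey : ∀ c', V.mem c' w → c' = a := by
      intro c' hc'
      obtain ⟨hc'x, hc'y'⟩ := (hw c').1 hc'
      have hc'κ : V.mem c' κ := hsub x hxU c' hc'x
      have : ¬ V.mem c' y := ((hy' c' hc'κ).1 hc'y')
      by_contra hne'
      exact this ((hy c').2 ⟨hc'x, hne'⟩)
    have hca := hkey c hc
    exact hnp w a hwU (fun z => ⟨hkey z, fun hz => hz ▸ (hca ▸ hc)⟩)

lemma infinite_ext_of_measure {U κ : V.carrier} (h : V.IsNormalMeasureOn U κ) :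
    {z : V.carrier | V.mem z κ}.Infinite := by
  obtain ⟨hcard, hUF, hcomp, hnp, hnorm⟩ := h
  by_contra hinf
  have hfin : {z : V.carrier | V.mem z κ}.Finite := Set.not_infinite.mp hinf
  have hκU : V.mem κ U := hUF.2.1
  have hsub : ∀ x, V.mem x U → {z | V.mem z x} ⊆ {z | V.mem z κ} :=
    fun x hx z hz => hUF.1 x hx z hz
  have key : ∀ n : ℕ, ∀ x, V.mem x U → n ≤ {z | V.mem z x}.ncard := by
    intro n
    induction n with
    | zero => intro x _; exact Nat.zero_le _
    | succ n ih =>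
      intro x hxU
      obtain ⟨a, ha⟩ := hUF.2.2.1 x hxU
      obtain ⟨y, hyU, hy⟩ := diff_singleton_mem hUF hnp hxU ha
      have hye : {z | V.mem z y} = {z | V.mem z x} \ {a} := by
        ext z; simp only [Set.mem_setOf_eq, Set.mem_diff, Set.mem_singleton_iff]; exact hy z
      have hfx : {z | V.mem z x}.Finite := hfin.subset (hsub x hxU)
      have h1 : ({z | V.mem z x} \ {a}).ncard + 1 = {z | V.mem z x}.ncard :=
        Set.ncard_diff_singleton_add_one ha hfx
      have h2 := ih y hyU
      rw [hye] at h2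
      omega
  have := key ({z | V.mem z κ}.ncard + 1) κ hκU
  omega

/-- For `A ⊆ κ` (`κ` an ordinal of transitive elements), `A ∈ H(κ⁺)`. -/
lemma inHSucc_of_sub {κ A : V.carrier} (hκ : V.IsOrd κ) (hA : V.Sub A κ) :
    V.InHSucc κ A := by
  obtain ⟨t, ht⟩ := exists_sep (V := V) κ
    (fun z => V.mem z A ∨ ∃ y, V.mem y A ∧ V.mem z y)
  have htκ : V.Sub t κ := fun z hz => ((ht z).1 hz).1
  refine ⟨t, ⟨?_, ?_, ?_⟩, ?_⟩
  · intro z hz w hw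
    obtain ⟨hzκ, hz'⟩ := (ht z).1 hz
    have hwκ : V.mem w κ := hκ.1 z hzκ w hw
    refine (ht w).2 ⟨hwκ, ?_⟩
    rcases hz' with hzA | ⟨y, hyA, hzy⟩
    · exact Or.inr ⟨z, hzA, hw⟩
    · exact Or.inr ⟨y, hyA, hκ.2 y (hA y hyA) z hzy w hw⟩
  · intro z hz
    exact (ht z).2 ⟨hA z hz, Or.inl hz⟩
  · intro t' ht't hAt' z hz
    obtain ⟨hzκ, hz'⟩ := (ht z).1 hz
    rcases hz' with hzA | ⟨y, hyA, hzy⟩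
    · exact hAt' z hzA
    · exact ht't y (hAt' y hyA) z hzy
  · exact exists_isInj t κ id (fun z hz => htκ z hz) (fun z z' _ _ h => h)

/-- Mostowski: an ∈-isomorphism between transitive sets is the identity. -/
lemma mostowski {t t' : V.carrier} (ht : V.IsTrans t) (ht' : V.IsTrans t')
    (φ : V.carrier → V.carrier)
    (hmapsto : ∀ z, V.mem z t → V.mem (φ z) t')
    (hsurj : ∀ z', V.mem z' t' → ∃ z, V.mem z t ∧ φ z = z')
    (hpres : ∀ z w, V.mem z t → V.mem w t → (V.mem z w ↔ V.mem (φ z) (φ w))) :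
    ∀ z, V.mem z t → φ z = z := by
  intro z
  induction z using WellFounded.induction V.ax.found with
  | _ z IH =>
  intro hzt
  apply eq_of_ext
  intro u
  constructor
  · intro hu
    have hφz : V.mem (φ z) t' := hmapsto z hzt
    have hut' : V.mem u t' := ht' (φ z) hφz u hu
    obtain ⟨w, hwt, rfl⟩ := hsurj u hut'
    have hw : V.mem w z := (hpres w z hwt hzt).2 hu
    rw [IH w hw hwt]
    exact hw
  · intro hu
    have hut : V.mem u t := ht z hzt u hu
    have := (hpres u z hut hzt).1 hu
    rwa [IH u hu hut] at this

lemma exists_code_embedding (X : Type) [Infinite X] :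
    ∃ g : (X ⊕ X ⊕ X × X) → X, Function.Injective g := by
  have h0 : Cardinal.aleph0 ≤ Cardinal.mk X := Cardinal.aleph0_le_mk X
  have hmk : Cardinal.mk (X ⊕ X ⊕ X × X) = Cardinal.mk X := by
    simp only [Cardinal.mk_sum, Cardinal.mk_prod, Cardinal.lift_id,
      Cardinal.mul_eq_self h0, Cardinal.add_eq_self h0]
  obtain ⟨e⟩ := Cardinal.eq.mp hmk
  exact ⟨e, e.injective⟩

/-- Tagged pairing functions on the extension of an (infinite) internal set. -/
lemma exists_tags {κ : V.carrier} (hinf : {z : V.carrier | V.mem z κ}.Infinite) :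
    ∃ (q1 q2 : V.carrier → V.carrier) (q3 : V.carrier → V.carrier → V.carrier),
      (∀ c, V.mem c κ → V.mem (q1 c) κ) ∧ (∀ c, V.mem c κ → V.mem (q2 c) κ) ∧
      (∀ c d, V.mem c κ → V.mem d κ → V.mem (q3 c d) κ) ∧
      (∀ c c', V.mem c κ → V.mem c' κ → q1 c = q1 c' → c = c') ∧
      (∀ c c', V.mem c κ → V.mem c' κ → q2 c = q2 c' → c = c') ∧
      (∀ c d c' d', V.mem c κ → V.mem d κ → V.mem c' κ → V.mem d' κ →
        q3 c d = q3 c' d' → c = c' ∧ d = d') ∧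
      (∀ c c', V.mem c κ → V.mem c' κ → q1 c ≠ q2 c') ∧
      (∀ c c' d', V.mem c κ → V.mem c' κ → V.mem d' κ → q1 c ≠ q3 c' d') ∧
      (∀ c c' d', V.mem c κ → V.mem c' κ → V.mem d' κ → q2 c ≠ q3 c' d') := by
  classical
  haveI hX : Infinite {z : V.carrier // V.mem z κ} := hinf.to_subtype
  obtain ⟨g, hg⟩ := exists_code_embedding {z : V.carrier // V.mem z κ}
  refine ⟨fun c => if hc : V.mem c κ then (g (Sum.inl ⟨c, hc⟩)).1 else c,
          fun c => if hc : V.mem c κ then (g (Sum.inr (Sum.inl ⟨c, hc⟩))).1 else c,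
          fun c d => if hc : V.mem c κ then (if hd : V.mem d κ then
            (g (Sum.inr (Sum.inr (⟨c, hc⟩, ⟨d, hd⟩)))).1 else c) else c,
          ?_, ?_, ?_, ?_, ?_, ?_, ?_, ?_, ?_⟩
  · intro c hc; simp only [dif_pos hc]; exact (g _).2
  · intro c hc; simp only [dif_pos hc]; exact (g _).2
  · intro c d hc hd; simp only [dif_pos hc, dif_pos hd]; exact (g _).2
  · intro c c' hc hc' he
    simp only [dif_pos hc, dif_pos hc'] at he
    have := hg (Subtype.coe_injective he)
    exact congrArg Subtype.val (Sum.inl.inj this)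
  · intro c c' hc hc' he
    simp only [dif_pos hc, dif_pos hc'] at he
    have := Sum.inl.inj (Sum.inr.inj (hg (Subtype.coe_injective he)))
    exact congrArg Subtype.val this
  · intro c d c' d' hc hd hc' hd' he
    simp only [dif_pos hc, dif_pos hd, dif_pos hc', dif_pos hd'] at he
    have := Sum.inr.inj (Sum.inr.inj (hg (Subtype.coe_injective he)))
    exact ⟨congrArg Subtype.val (congrArg Prod.fst this),
      congrArg Subtype.val (congrArg Prod.snd this)⟩
  · intro c c' hc hc' he
    simp only [dif_pos hc, dif_pos hc'] at he
    exact Sum.inl_ne_inr (hg (Subtype.coe_injective he))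
  · intro c c' d' hc hc' hd' he
    simp only [dif_pos hc, dif_pos hc', dif_pos hd'] at he
    exact Sum.inl_ne_inr (hg (Subtype.coe_injective he))
  · intro c c' d' hc hc' hd' he
    simp only [dif_pos hc, dif_pos hc', dif_pos hd'] at he
    have := Sum.inr.inj (hg (Subtype.coe_injective he))
    exact Sum.inl_ne_inr this

/-- The coding injection `H(κ⁺) → P(κ)`. -/
lemma exists_ext_inj_h_to_p {κ p h : V.carrier}
    (hinf : {z : V.carrier | V.mem z κ}.Infinite)
    (hp : V.IsPowerOf p κ) (hh : V.IsHSuccSet κ h) :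
    ∃ G : V.carrier → V.carrier,
      (∀ x, V.mem x h → V.mem (G x) p) ∧
      (∀ x x', V.mem x h → V.mem x' h → G x = G x' → x = x') := by
  classical
  obtain ⟨q1, q2, q3, hq1κ, hq2κ, hq3κ, hq1i, hq2i, hq3i, hq12, hq13, hq23⟩ :=
    exists_tags (V := V) hinf
  have hdata : ∀ x, ∃ t, ∃ e : V.carrier → V.carrier,
      V.mem x h → (V.IsTransClosureOf x t ∧
        (∀ z, V.mem z t → V.mem (e z) κ) ∧
        (∀ z z', V.mem z t → V.mem z' t → e z = e z' → z = z')) := by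
    intro x
    by_cases hx : V.mem x h
    · obtain ⟨t, htc, f, hf⟩ := (hh x).1 hx
      obtain ⟨e, he1, he2, _⟩ := extract_inj hf
      exact ⟨t, e, fun _ => ⟨htc, he1, he2⟩⟩
    · exact ⟨x, id, fun hx' => absurd hx' hx⟩
  choose T E hTE using hdata
  have hScode : ∀ x, ∃ A, ∀ c, V.mem c A ↔ (V.mem c κ ∧
      ((∃ z, V.mem z (T x) ∧ c = q2 (E x z)) ∨
       (∃ z, V.mem z x ∧ c = q1 (E x z)) ∨
       (∃ z w, V.mem z (T x) ∧ V.mem w (T x) ∧ V.mem z w ∧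
          c = q3 (E x z) (E x w)))) :=
    fun x => exists_sep κ _
  choose G hG using hScode
  have hGp : ∀ x, V.mem x h → V.mem (G x) p := by
    intro x hx
    exact (hp (G x)).2 (fun z hz => ((hG x z).1 hz).1)
  refine ⟨G, hGp, ?_⟩
  intro x x' hx hx' hGe
  obtain ⟨htc, heκ, hei⟩ := hTE x hx
  obtain ⟨htc', heκ', hei'⟩ := hTE x' hx'
  -- membership in the code sets
  have hSmem : ∀ (y : V.carrier), (V.IsTransClosureOf y (T y) ∧
        (∀ z, V.mem z (T y) → V.mem (E y z) κ)) → ∀ c,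
      (((∃ z, V.mem z (T y) ∧ c = q2 (E y z)) ∨
       (∃ z, V.mem z y ∧ c = q1 (E y z)) ∨
       (∃ z w, V.mem z (T y) ∧ V.mem w (T y) ∧ V.mem z w ∧
          c = q3 (E y z) (E y w))) → V.mem c (G y)) := by
    rintro y ⟨hyc, hyκ⟩ c hc
    refine (hG y c).2 ⟨?_, hc⟩
    rcases hc with ⟨z, hz, rfl⟩ | ⟨z, hz, rfl⟩ | ⟨z, w, hz, hw, _, rfl⟩
    · exact hq2κ _ (hyκ z hz)
    · exact hq1κ _ (hyκ z (hyc.2.1 z hz))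
    · exact hq3κ _ _ (hyκ z hz) (hyκ w hw)
  have hin : ∀ c, V.mem c (G x) ↔ V.mem c (G x') := fun c => by rw [hGe]
  -- transferring a code from x to x'
  have htrans : ∀ c,
      ((∃ z, V.mem z (T x) ∧ c = q2 (E x z)) ∨
       (∃ z, V.mem z x ∧ c = q1 (E x z)) ∨
       (∃ z w, V.mem z (T x) ∧ V.mem w (T x) ∧ V.mem z w ∧
          c = q3 (E x z) (E x w))) →
      ((∃ z, V.mem z (T x') ∧ c = q2 (E x' z)) ∨
       (∃ z, V.mem z x' ∧ c = q1 (E x' z)) ∨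
       (∃ z w, V.mem z (T x') ∧ V.mem w (T x') ∧ V.mem z w ∧
          c = q3 (E x' z) (E x' w))) := by
    intro c hc
    have := (hin c).1 (hSmem x ⟨htc, heκ⟩ c hc)
    exact ((hG x' c).1 this).2
  have htrans' : ∀ c,
      ((∃ z, V.mem z (T x') ∧ c = q2 (E x' z)) ∨
       (∃ z, V.mem z x' ∧ c = q1 (E x' z)) ∨
       (∃ z w, V.mem z (T x') ∧ V.mem w (T x') ∧ V.mem z w ∧
          c = q3 (E x' z) (E x' w))) →
      ((∃ z, V.mem z (T x) ∧ c = q2 (E x z)) ∨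
       (∃ z, V.mem z x ∧ c = q1 (E x z)) ∨
       (∃ z w, V.mem z (T x) ∧ V.mem w (T x) ∧ V.mem z w ∧
          c = q3 (E x z) (E x w))) := by
    intro c hc
    have := (hin c).2 (hSmem x' ⟨htc', heκ'⟩ c hc)
    exact ((hG x c).1 this).2
  -- step 1: the comparison map φ
  have step1 : ∀ z, ∃ z', V.mem z (T x) → (V.mem z' (T x') ∧ E x' z' = E x z) := by
    intro z
    by_cases hz : V.mem z (T x)
    · rcases htrans _ (Or.inl ⟨z, hz, rfl⟩) with
        ⟨z1, hz1, heq⟩ | ⟨z1, hz1, heq⟩ | ⟨z1, w1, hz1, hw1, _, heq⟩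
      · exact ⟨z1, fun _ => ⟨hz1,
          (hq2i _ _ (heκ z hz) (heκ' z1 hz1) heq).symm⟩⟩
      · exact absurd heq.symm (hq12 _ _ (heκ' z1 (htc'.2.1 z1 hz1)) (heκ z hz))
      · exact absurd heq (hq23 _ _ _ (heκ z hz) (heκ' z1 hz1) (heκ' w1 hw1))
    · exact ⟨z, fun hz' => absurd hz' hz⟩
  choose φ hφ using step1
  have step1' : ∀ z', ∃ z, V.mem z' (T x') → (V.mem z (T x) ∧ E x z = E x' z') := by
    intro z'
    by_cases hz : V.mem z' (T x')
    · rcases htrans' _ (Or.inl ⟨z', hz, rfl⟩) with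
        ⟨z1, hz1, heq⟩ | ⟨z1, hz1, heq⟩ | ⟨z1, w1, hz1, hw1, _, heq⟩
      · exact ⟨z1, fun _ => ⟨hz1,
          (hq2i _ _ (heκ' z' hz) (heκ z1 hz1) heq).symm⟩⟩
      · exact absurd heq.symm (hq12 _ _ (heκ z1 (htc.2.1 z1 hz1)) (heκ' z' hz))
      · exact absurd heq (hq23 _ _ _ (heκ' z' hz) (heκ z1 hz1) (heκ w1 hw1))
    · exact ⟨z', fun hz' => absurd hz' hz⟩
  choose ψ hψ using step1'
  have hφt : ∀ z, V.mem z (T x) → V.mem (φ z) (T x') := fun z hz => (hφ z hz).1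
  have hφE : ∀ z, V.mem z (T x) → E x' (φ z) = E x z := fun z hz => (hφ z hz).2
  have hφsurj : ∀ z', V.mem z' (T x') → ∃ z, V.mem z (T x) ∧ φ z = z' := by
    intro z' hz'
    obtain ⟨hzt, hze⟩ := hψ z' hz'
    refine ⟨ψ z', hzt, ?_⟩
    exact hei' _ _ (hφt _ hzt) hz' ((hφE _ hzt).trans hze)
  have hφpres : ∀ z w, V.mem z (T x) → V.mem w (T x) →
      (V.mem z w ↔ V.mem (φ z) (φ w)) := by
    intro z w hz hw
    constructor
    · intro hzw
      rcases htrans _ (Or.inr (Or.inr ⟨z, w, hz, hw, hzw, rfl⟩)) with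
        ⟨z1, hz1, heq⟩ | ⟨z1, hz1, heq⟩ | ⟨z1, w1, hz1, hw1, hzw1, heq⟩
      · exact absurd heq.symm (hq23 _ _ _ (heκ' z1 hz1) (heκ z hz) (heκ w hw))
      · exact absurd heq.symm
          (hq13 _ _ _ (heκ' z1 (htc'.2.1 z1 hz1)) (heκ z hz) (heκ w hw))
      · obtain ⟨h1, h2⟩ := hq3i _ _ _ _ (heκ z hz) (heκ w hw)
          (heκ' z1 hz1) (heκ' w1 hw1) heq
        have hz1' : z1 = φ z := hei' _ _ hz1 (hφt z hz) (h1.symm.trans (hφE z hz).symm)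
        have hw1' : w1 = φ w := hei' _ _ hw1 (hφt w hw) (h2.symm.trans (hφE w hw).symm)
        rwa [hz1', hw1'] at hzw1
    · intro hzw
      have hc : q3 (E x z) (E x w) = q3 (E x' (φ z)) (E x' (φ w)) := by
        rw [hφE z hz, hφE w hw]
      rcases htrans' _ (Or.inr (Or.inr ⟨φ z, φ w, hφt z hz, hφt w hw, hzw, hc⟩)) with
        ⟨z1, hz1, heq⟩ | ⟨z1, hz1, heq⟩ | ⟨z1, w1, hz1, hw1, hzw1, heq⟩
      · exact absurd heq.symm (fun h =>
          (hq23 _ _ _ (heκ z1 hz1) (heκ z hz) (heκ w hw)) h)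
      · exact absurd heq.symm
          (hq13 _ _ _ (heκ z1 (htc.2.1 z1 hz1)) (heκ z hz) (heκ w hw))
      · obtain ⟨h1, h2⟩ := hq3i _ _ _ _ (heκ z hz) (heκ w hw)
          (heκ z1 hz1) (heκ w1 hw1) heq
        have hz1' : z1 = z := hei _ _ hz1 hz h1.symm
        have hw1' : w1 = w := hei _ _ hw1 hw h2.symm
        rwa [hz1', hw1'] at hzw1
  have hid : ∀ z, V.mem z (T x) → φ z = z :=
    mostowski htc.1 htc'.1 φ hφt hφsurj hφpres
  have hTT : ∀ z, V.mem z (T x) → V.mem z (T x') := by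
    intro z hz; have := hφt z hz; rwa [hid z hz] at this
  have hTT' : ∀ z, V.mem z (T x') → V.mem z (T x) := by
    intro z' hz'
    obtain ⟨z, hz, rfl⟩ := hφsurj z' hz'
    rwa [hid z hz]
  have hEE : ∀ z, V.mem z (T x) → E x' z = E x z := by
    intro z hz; have := hφE z hz; rwa [hid z hz] at this
  apply eq_of_ext
  intro z
  constructor
  · intro hzx
    have hzt : V.mem z (T x) := htc.2.1 z hzx
    rcases htrans _ (Or.inr (Or.inl ⟨z, hzx, rfl⟩)) with
      ⟨z1, hz1, heq⟩ | ⟨z1, hz1, heq⟩ | ⟨z1, w1, hz1, hw1, _, heq⟩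
    · exact absurd heq (hq12 _ _ (heκ z hzt) (heκ' z1 hz1))
    · have hz1t : V.mem z1 (T x') := htc'.2.1 z1 hz1
      have : E x' z1 = E x' z := by
        rw [hEE z hzt]
        exact (hq1i _ _ (heκ z hzt) (heκ' z1 hz1t) heq).symm
      rwa [hei' _ _ hz1t (hTT z hzt) this] at hz1
    · exact absurd heq (hq13 _ _ _ (heκ z hzt) (heκ' z1 hz1) (heκ' w1 hw1))
  · intro hzx'
    have hzt' : V.mem z (T x') := htc'.2.1 z hzx'
    have hzt : V.mem z (T x) := hTT' z hzt'
    rcases htrans' _ (Or.inr (Or.inl ⟨z, hzx', rfl⟩)) with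
      ⟨z1, hz1, heq⟩ | ⟨z1, hz1, heq⟩ | ⟨z1, w1, hz1, hw1, _, heq⟩
    · exact absurd heq (hq12 _ _ (heκ' z hzt') (heκ z1 hz1))
    · have hz1t : V.mem z1 (T x) := htc.2.1 z1 hz1
      have : E x z1 = E x z := by
        have h1 : E x z1 = E x' z :=
          (hq1i _ _ (heκ' z hzt') (heκ z1 hz1t) heq).symm
        rw [h1, hEE z hzt]
      rwa [hei _ _ hz1t hzt this] at hz1
    · exact absurd heq (hq13 _ _ _ (heκ' z hzt') (heκ z1 hz1) (heκ w1 hw1))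

/-- `P(κ)` and `H(κ⁺)` are (internally) equinumerous. -/
lemma equinum_p_h {κ p h : V.carrier} (hκ : V.IsOrd κ)
    (hinf : {z : V.carrier | V.mem z κ}.Infinite)
    (hp : V.IsPowerOf p κ) (hh : V.IsHSuccSet κ h) : V.Equinum p h := by
  classical
  have hph : ∀ A, V.mem A p → V.mem A h := fun A hA =>
    (hh A).2 (inHSucc_of_sub hκ ((hp A).1 hA))
  obtain ⟨G, hGp, hGi⟩ := exists_ext_inj_h_to_p hinf hp hh
  let f : {z : V.carrier // V.mem z p} → {z : V.carrier // V.mem z h} :=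
    fun a => ⟨a.1, hph a.1 a.2⟩
  let g : {z : V.carrier // V.mem z h} → {z : V.carrier // V.mem z p} :=
    fun b => ⟨G b.1, hGp b.1 b.2⟩
  have hf : Function.Injective f := by
    intro a a' he
    have h2 := Subtype.ext_iff.mp he
    exact Subtype.ext h2
  have hg : Function.Injective g := by
    intro b b' he
    have h2 := Subtype.ext_iff.mp he
    exact Subtype.ext (hGi b.1 b'.1 b.2 b'.2 h2)
  obtain ⟨F, hF⟩ := Function.Embedding.schroeder_bernstein hf hg
  refine exists_isBij p h
    (fun z => if hz : V.mem z p then (F ⟨z, hz⟩).1 else z) ?_ ?_ ?_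
  · intro z hz; simp only [dif_pos hz]; exact (F ⟨z, hz⟩).2
  · intro z z' hz hz' he
    simp only [dif_pos hz, dif_pos hz'] at he
    have := hF.1 (Subtype.ext he)
    exact congrArg Subtype.val this
  · intro y hy
    obtain ⟨a, ha⟩ := hF.2 ⟨y, hy⟩
    refine ⟨a.1, a.2, ?_⟩
    simp only [dif_pos a.2]
    have : (⟨a.1, a.2⟩ : {z : V.carrier // V.mem z p}) = a := rfl
    rw [this, ha]

end SetModel

section FOMachinery

open FirstOrder.Language

/-- A membership structure on a type. -/
def mstr {α : Type} (m : α → α → Prop) : setLang.Structure α :=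
  ⟨fun f _ => f.elim, fun r v => match r with | .mem => m (v 0) (v 1)⟩

lemma mstr_rel {α : Type} (m : α → α → Prop) (v : Fin 2 → α) :
    @FirstOrder.Language.Structure.RelMap setLang α (mstr m) 2 SetLangRel.mem v =
      m (v 0) (v 1) := rfl

/-- Bound variable as a term. -/
def bvT {n : ℕ} (j : Fin n) : setLang.Term (Fin 3 ⊕ Fin n) := Term.var (Sum.inr j)

/-- Free variable as a term. -/
def fvT {n : ℕ} (i : Fin 3) : setLang.Term (Fin 3 ⊕ Fin n) := Term.var (Sum.inl i)

/-- Atomic membership formula. -/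
def memF {n : ℕ} (t u : setLang.Term (Fin 3 ⊕ Fin n)) : setLang.BoundedFormula (Fin 3) n :=
  Relations.boundedFormula (L := setLang) (n := 2)
    (SetLangRel.mem : setLang.Relations 2) ![t, u]

def psi1 : setLang.BoundedFormula (Fin 3) 5 :=
  (memF (bvT 4) (bvT 3)).iff (Term.bdEqual (bvT 4) (bvT 0))

def psi2 : setLang.BoundedFormula (Fin 3) 5 :=
  (memF (bvT 4) (bvT 3)).iff ((Term.bdEqual (bvT 4) (bvT 0)) ⊔ (Term.bdEqual (bvT 4) (bvT 2)))

def psiKP : setLang.BoundedFormula (Fin 3) 3 :=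
  BoundedFormula.all ((memF (bvT 3) (bvT 1)).iff (psi1.all ⊔ psi2.all))

/-- The key formula: `∀ a q y ((q ∈ ell ∧ KPair(q,a,y)) → (a ∈ X ↔ β ∈ y))`,
with free variables `0 = ell`, `1 = X`, `2 = β`. -/
def PsiF : setLang.Formula (Fin 3) :=
  BoundedFormula.all (BoundedFormula.all (BoundedFormula.all
    (((memF (bvT 1) (fvT 0)) ⊓ psiKP).imp
      ((memF (bvT 0) (fvT 1)).iff (memF (fvT 2) (bvT 2))))))

variable {α : Type} (m : α → α → Prop)

lemma realize_memF_bb {n : ℕ} (j k : Fin n) (v : Fin 3 → α) (xs : Fin n → α) :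
    @FirstOrder.Language.BoundedFormula.Realize setLang α (mstr m) (Fin 3) n
      (memF (bvT j) (bvT k)) v xs ↔ m (xs j) (xs k) := by
  letI : setLang.Structure α := mstr m
  exact Iff.rfl

lemma realize_memF_bf {n : ℕ} (j : Fin n) (i : Fin 3) (v : Fin 3 → α) (xs : Fin n → α) :
    @FirstOrder.Language.BoundedFormula.Realize setLang α (mstr m) (Fin 3) n
      (memF (bvT j) (fvT i)) v xs ↔ m (xs j) (v i) := by
  letI : setLang.Structure α := mstr m
  exact Iff.rfl

lemma realize_memF_fb {n : ℕ} (i : Fin 3) (j : Fin n) (v : Fin 3 → α) (xs : Fin n → α) :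
    @FirstOrder.Language.BoundedFormula.Realize setLang α (mstr m) (Fin 3) n
      (memF (fvT i) (bvT j)) v xs ↔ m (v i) (xs j) := by
  letI : setLang.Structure α := mstr m
  exact Iff.rfl

lemma realize_psi1 (v : Fin 3 → α) (xs : Fin 5 → α) :
    @FirstOrder.Language.BoundedFormula.Realize setLang α (mstr m) (Fin 3) 5
      psi1 v xs ↔ (m (xs 4) (xs 3) ↔ xs 4 = xs 0) := by
  letI : setLang.Structure α := mstr m
  rw [psi1, BoundedFormula.realize_iff, realize_memF_bb, BoundedFormula.realize_bdEqual]
  simp [bvT]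

lemma realize_psi2 (v : Fin 3 → α) (xs : Fin 5 → α) :
    @FirstOrder.Language.BoundedFormula.Realize setLang α (mstr m) (Fin 3) 5
      psi2 v xs ↔ (m (xs 4) (xs 3) ↔ (xs 4 = xs 0 ∨ xs 4 = xs 2)) := by
  letI : setLang.Structure α := mstr m
  rw [psi2, BoundedFormula.realize_iff, realize_memF_bb, BoundedFormula.realize_sup,
    BoundedFormula.realize_bdEqual, BoundedFormula.realize_bdEqual]
  simp [bvT]

lemma realize_psiKP (v : Fin 3 → α) (xs : Fin 3 → α) :
    @FirstOrder.Language.BoundedFormula.Realize setLang α (mstr m) (Fin 3) 3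
      psiKP v xs ↔
      (∀ z, m z (xs 1) ↔ ((∀ w, m w z ↔ w = xs 0) ∨ (∀ w, m w z ↔ (w = xs 0 ∨ w = xs 2)))) := by
  letI : setLang.Structure α := mstr m
  rw [psiKP, BoundedFormula.realize_all]
  refine forall_congr' (fun z => ?_)
  rw [BoundedFormula.realize_iff, realize_memF_bb, BoundedFormula.realize_sup,
    BoundedFormula.realize_all, BoundedFormula.realize_all]
  have e4 : ∀ w : α, (Fin.snoc (Fin.snoc xs z) w : Fin 5 → α) 4 = w := fun w => by
    simp [Fin.snoc]
  have e3 : ∀ w : α, (Fin.snoc (Fin.snoc xs z) w : Fin 5 → α) 3 = z := fun w => by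
    simp [Fin.snoc]
  have e0 : ∀ w : α, (Fin.snoc (Fin.snoc xs z) w : Fin 5 → α) 0 = xs 0 := fun w => by
    simp [Fin.snoc]
  have e2 : ∀ w : α, (Fin.snoc (Fin.snoc xs z) w : Fin 5 → α) 2 = xs 2 := fun w => by
    simp [Fin.snoc]
    congr 1
  have ez : (Fin.snoc xs z : Fin 4 → α) 3 = z := by
    simp [Fin.snoc]
  have e1 : (Fin.snoc xs z : Fin 4 → α) 1 = xs 1 := by
    simp [Fin.snoc]
  rw [ez, e1]
  exact iff_congr Iff.rfl (or_congr
    (forall_congr' fun w => by rw [realize_psi1, e4, e3, e0])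
    (forall_congr' fun w => by rw [realize_psi2, e4, e3, e0, e2]))

lemma realize_PsiF (v : Fin 3 → α) :
    @FirstOrder.Language.Formula.Realize setLang α (mstr m) (Fin 3) PsiF v ↔
      ∀ a q y, (m q (v 0) ∧
          (∀ z, m z q ↔ ((∀ w, m w z ↔ w = a) ∨ (∀ w, m w z ↔ (w = a ∨ w = y))))) →
        (m a (v 1) ↔ m (v 2) y) := by
  letI : setLang.Structure α := mstr m
  simp only [FirstOrder.Language.Formula.Realize]
  rw [PsiF, BoundedFormula.realize_all]
  refine forall_congr' fun a => ?_
  rw [BoundedFormula.realize_all]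
  refine forall_congr' fun q => ?_
  rw [BoundedFormula.realize_all]
  refine forall_congr' fun y => ?_
  have h2 : (Fin.snoc (Fin.snoc (Fin.snoc (default : Fin 0 → α) a) q) y : Fin 3 → α) 2
      = y := by
    simp [Fin.snoc]
    try exact fun h => absurd h (by decide)
  have h1 : (Fin.snoc (Fin.snoc (Fin.snoc (default : Fin 0 → α) a) q) y : Fin 3 → α) 1
      = q := by
    simp [Fin.snoc]
    try rw [dif_pos (by decide), dif_neg (by decide)]
  have h0 : (Fin.snoc (Fin.snoc (Fin.snoc (default : Fin 0 → α) a) q) y : Fin 3 → α) 0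
      = a := by
    simp [Fin.snoc]
    try rw [dif_pos (by decide), dif_pos (by decide), dif_neg (by decide)]
  rw [BoundedFormula.realize_imp, BoundedFormula.realize_inf, realize_memF_bf,
    realize_psiKP, BoundedFormula.realize_iff, realize_memF_bf, realize_memF_fb,
    h0, h1, h2]

end FOMachinery

namespace SetModel

/-- The value `A = j(ℓ)(κ)` of a normal ultrapower is determined by the measure `U`:
membership of `β < κ` in `A` is decided by whether `{α : β ∈ ℓ(α)} ∈ U`. -/
lemma measure_determines {W : SetModel} {κ U ell v A : W.carrier}
    (hell : W.IsFunc ell κ v)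
    {C : W.carrier → Prop} {j : W.carrier → W.carrier}
    (hup : IsNormalUltrapower W κ U C j)
    (hmap : W.Maps (j ell) κ A)
    {β : W.carrier} (hβ : W.mem β κ) {X : W.carrier}
    (hX : ∀ z, W.mem z X ↔ (W.mem z κ ∧ ∃ y, W.Maps ell z y ∧ W.mem β y)) :
    (W.mem X U ↔ W.mem β A) := by
  obtain ⟨hinner, helem, hmeas, hcrit, hmeasures, honto⟩ := hup
  obtain ⟨hCj, helem'⟩ := helem
  have hdc : ∀ x y, C y → W.mem x y → C x := hinner.1
  -- κ is in the inner class
  have hCκ : C κ := by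
    obtain ⟨f, hfd, hfm⟩ := honto (j κ) (hCj κ)
    obtain ⟨pp, hppf, hppk⟩ := hfm
    have hCpp : C pp := hdc pp (j f) (hCj f) hppf
    obtain ⟨sκ, hsκ⟩ := exists_singleton (V := W) κ
    have hsp : W.mem sκ pp := (hppk sκ).2 (Or.inl fun w => hsκ w)
    exact hdc κ sκ (hdc sκ pp hCpp hsp) ((hsκ κ).2 rfl)
  obtain ⟨p', hp'jell, hp'k⟩ := hmap
  have hCp' : C p' := hdc p' (j ell) (hCj ell) hp'jell
  have hCA : C A := by
    obtain ⟨q, hq⟩ := W.ax.pairing κ A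
    have hqp : W.mem q p' := (hp'k q).2 (Or.inr fun w => hq w)
    exact hdc A q (hdc q p' hCp' hqp) ((hq A).2 (Or.inr rfl))
  -- the formula holds in `W`
  have hsat : W.Sat PsiF ![ell, X, β] := by
    refine (realize_PsiF W.mem ![ell, X, β]).2 ?_
    intro a q y ⟨hq, hkp⟩
    have hmapsy : W.Maps ell a y := ⟨q, hq, hkp⟩
    have haκ : W.mem a κ := hell.1.2.1 q a y hq hkp
    constructor
    · intro haX
      obtain ⟨_, y', hy', hβy'⟩ := (hX a).1 haX
      rwa [hell.1.2.2.2 a y' y hy' hmapsy] at hβy'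
    · intro hβy
      exact (hX a).2 ⟨haκ, y, hmapsy, hβy⟩
  -- transfer via elementarity
  have htrans := (helem' 3 PsiF ![ell, X, β]).1 hsat
  have htr := (realize_PsiF (fun a b : {x : W.carrier // C x} => W.mem a.1 b.1)
    (fun i => ⟨j (![ell, X, β] i), hCj (![ell, X, β] i)⟩)).1 htrans
  -- instantiate at κ, p', A
  have hsubKP : ∀ z : {x : W.carrier // C x}, W.mem z.1 p' ↔
      ((∀ w : {x : W.carrier // C x}, W.mem w.1 z.1 ↔ w = ⟨κ, hCκ⟩) ∨
       (∀ w : {x : W.carrier // C x}, W.mem w.1 z.1 ↔ (w = ⟨κ, hCκ⟩ ∨ w = ⟨A, hCA⟩))) := by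
    intro z
    rw [hp'k z.1]
    constructor
    · rintro (h1 | h1)
      · exact Or.inl (fun w => by rw [h1 w.1, Subtype.ext_iff])
      · refine Or.inr (fun w => ?_)
        rw [h1 w.1, Subtype.ext_iff, Subtype.ext_iff]
    · rintro (h1 | h1)
      · refine Or.inl (fun w => ?_)
        constructor
        · intro hw
          have hCw : C w := hdc w z.1 z.2 hw
          have := (h1 ⟨w, hCw⟩).1 hw
          exact congrArg Subtype.val this
        · intro hw
          subst hw
          exact (h1 ⟨_, hCκ⟩).2 rfl
      · refine Or.inr (fun w => ?_)
        constructor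
        · intro hw
          have hCw : C w := hdc w z.1 z.2 hw
          rcases (h1 ⟨w, hCw⟩).1 hw with h2 | h2
          · exact Or.inl (congrArg Subtype.val h2)
          · exact Or.inr (congrArg Subtype.val h2)
        · intro hw
          rcases hw with hw | hw <;> subst hw
          · exact (h1 ⟨_, hCκ⟩).2 (Or.inl rfl)
          · exact (h1 ⟨_, hCA⟩).2 (Or.inr rfl)
  have hkey : W.mem κ (j X) ↔ W.mem (j β) A :=
    htr ⟨κ, hCκ⟩ ⟨p', hCp'⟩ ⟨A, hCA⟩ ⟨hp'jell, hsubKP⟩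
  rw [hcrit.2.2 β hβ] at hkey
  have hXκ : W.Sub X κ := fun z hz => ((hX z).1 hz).1
  rw [hmeasures X hXκ]
  exact hkey

end SetModel

/-- If a measurable cardinal `κ` has a Laver function for
measurability, then there are at least `2^κ = |H(κ⁺)|` many normal measures on `κ`. -/
theorem stmt7 (V : SetModel) (κ : V.carrier)
    (hκ : V.IsMeasurableCard κ) (hl : HasLaverFunction V κ) :
    ∀ p h s, V.IsPowerOf p κ → V.IsHSuccSet κ h → V.IsNormalMeasuresSet κ s →
      V.Equinum p h ∧ V.CardLE p s := by
  classical
  intro p h s hp hh hs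
  obtain ⟨U0, hU0⟩ := hκ
  have hord : V.IsOrd κ := hU0.1.1
  have hinf := SetModel.infinite_ext_of_measure hU0
  refine ⟨SetModel.equinum_p_h hord hinf hp hh, ?_⟩
  obtain ⟨ell, vv, hvs, hell, hlav⟩ := hl
  -- the decoding sets
  have hXex : ∀ β, ∃ X, ∀ z, V.mem z X ↔
      (V.mem z κ ∧ ∃ y, V.Maps ell z y ∧ V.mem β y) :=
    fun β => SetModel.exists_sep κ _
  choose Xf hXf using hXex
  -- choose a measure for each subset of κ via the Laver function
  have hbase : ∀ A, ∃ U, V.mem A p → (V.IsNormalMeasureOn U κ ∧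
      ∀ β, V.mem β κ → (V.mem (Xf β) U ↔ V.mem β A)) := by
    intro A
    by_cases hA : V.mem A p
    · have hsub : V.Sub A κ := (hp A).1 hA
      obtain ⟨U, C, j, hup, hmap⟩ := hlav A (SetModel.inHSucc_of_sub hord hsub)
      refine ⟨U, fun _ => ⟨hup.2.2.1, fun β hβ => ?_⟩⟩
      exact SetModel.measure_determines hell hup hmap hβ (hXf β)
    · exact ⟨A, fun h' => absurd h' hA⟩
  choose Umap hU using hbase
  refine SetModel.exists_isInj p s Umap ?_ ?_
  · intro A hA
    exact (hs (Umap A)).2 ((hU A hA).1)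
  · intro A B hA hB hUe
    apply SetModel.eq_of_ext
    intro β
    constructor
    · intro hβA
      have hβκ : V.mem β κ := (hp A).1 hA β hβA
      have h1 := ((hU A hA).2 β hβκ).2 hβA
      rw [hUe] at h1
      exact ((hU B hB).2 β hβκ).1 h1
    · intro hβB
      have hβκ : V.mem β κ := (hp B).1 hB β hβB
      have h1 := ((hU B hB).2 β hβκ).2 hβB
      rw [← hUe] at h1
      exact ((hU A hA).2 β hβκ).1 h1
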